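/- arXiv:2604.00751 — 2 statements merged into one kernel-verified Lean document; each statement's English description precedes it below -/
import Mathlib

section
/- The ℂ-linear span of the set of pure wedges (e_1 + φ(e_1)) ∧ (e_2 + φ(e_2)) ∧ ⋯ ∧ (e_d + φ(e_d)), where φ ranges over all ℂ-linear maps from V_d to V_{n−d}, is the entire space Λ^d ℂ^n. -/
/-- The `i`-th standard basis vector of `ℂ^n`. -/
noncomputable def ee (n : ℕ) (i : Fin n) : Fin n → ℂ := Pi.single i 1

/-- `V_d`: the span of the first `d` standard basis vectors. -/
noncomputable def Vlow (n d : ℕ) : Submodule ℂ (Fin n → ℂ) :=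
  Submodule.span ℂ {v | ∃ i : Fin n, i.val < d ∧ v = ee n i}

/-- `V_{n-d}`: the span of the last `n - d` standard basis vectors. -/
noncomputable def Vhigh (n d : ℕ) : Submodule ℂ (Fin n → ℂ) :=
  Submodule.span ℂ {v | ∃ i : Fin n, d ≤ i.val ∧ v = ee n i}

/-!
Since `φ` may send `e_1, …, e_d` to arbitrary vectors of `V_{n-d}`, the span contains
`(e_1 + w_1) ∧ ⋯ ∧ (e_d + w_d)` for all `w_1, …, w_d ∈ V_{n-d}`. Peeling off one factor at a time
via `x_k = (e_k + x_k) - e_k`, it contains every wedge `x_1 ∧ ⋯ ∧ x_d` in which each `x_k` is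
either in `V_{n-d}` or equal to `e_k`. Up to sign, every standard basis wedge
`e_{i_1} ∧ ⋯ ∧ e_{i_d}` with distinct indices is of this form: reorder its factors so that each
`e_j` with `j ≤ d` sits in slot `j`.
-/

open Function ExteriorAlgebra

theorem Function.Injective.exists_perm_apply_eq_of_mem_range {ι κ : Type*} [Fintype ι]
    {i c : ι → κ} (hi : Injective i) :
    ∃ σ : Equiv.Perm ι, ∀ k, i k ∈ Set.range c → c (σ k) = i k := by
  classical
  let f k := if h : i k ∈ Set.range c then h.choose else k
  have hcf : ∀ k, i k ∈ Set.range c → c (f k) = i k := fun k hk => by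
    simp only [f, dif_pos hk]
    exact hk.choose_spec
  obtain ⟨g, hg⟩ := Set.MapsTo.exists_equiv_extend_of_card_eq (t := Finset.univ)
    (s := {k | i k ∈ Set.range c}) (f := f) Finset.card_univ.symm
    (fun _ _ => Finset.mem_univ _) fun k₁ hk₁ k₂ hk₂ h => hi <| by
      rw [← hcf k₁ hk₁, ← hcf k₂ hk₂, h]
  refine ⟨g.trans (Equiv.subtypeUnivEquiv Finset.mem_univ), fun k hk => ?_⟩
  rw [← hcf k hk, ← hg k hk]
  rfl

namespace MultilinearMap

variable {R ι N : Type*} {M : ι → Type*} [Ring R] [Fintype ι]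
  [∀ k, AddCommGroup (M k)] [∀ k, Module R (M k)] [AddCommGroup N] [Module R N]

theorem apply_mem_of_forall_apply_add_mem (f : MultilinearMap R M N) {W : Submodule R N}
    {U : ∀ k, Submodule R (M k)} (b : ∀ k, M k)
    (hW : ∀ w : ∀ k, M k, (∀ k, w k ∈ U k) → f (b + w) ∈ W)
    (x : ∀ k, M k) (hx : ∀ k, x k ∈ U k ∨ x k - b k ∈ U k) : f x ∈ W := by
  classical
  suffices key : ∀ (C : Finset ι) (x : ∀ k, M k), (∀ k ∈ C, x k ∈ U k) →
      (∀ k ∉ C, x k - b k ∈ U k) → f x ∈ W by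
    exact key {k | x k ∈ U k} x (fun k hk => by simpa using hk)
      (fun k hk => (hx k).resolve_left (by simpa using hk))
  intro C
  induction C using Finset.induction_on with
  | empty =>
    intro x _ hxb
    simpa using hW (x - b) fun k => hxb k (Finset.notMem_empty k)
  | insert a C ha ih =>
    intro x hxC hxb
    have hsplit : f x = f (update x a (b a + x a)) - f (update x a (b a)) := by
      rw [f.map_update_add, add_sub_cancel_left, update_eq_self]
    have hupdate : ∀ y, y - b a ∈ U a → f (update x a y) ∈ W := by
      intro y hy
      refine ih _ (fun k hk => ?_) (fun k hk => ?_)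
      · rw [update_of_ne (ne_of_mem_of_not_mem hk ha)]
        exact hxC k (Finset.mem_insert_of_mem hk)
      · rcases eq_or_ne k a with rfl | hka
        · rwa [update_self]
        · rw [update_of_ne hka]
          exact hxb k (by simp [hka, hk])
    rw [hsplit]
    exact W.sub_mem (hupdate _ (by simpa using hxC a (Finset.mem_insert_self a C)))
      (hupdate _ (by simp))

end MultilinearMap

theorem coe_piBasisFun (n : ℕ) : ⇑(Pi.basisFun ℂ (Fin n)) = ee n :=
  funext (Pi.basisFun_apply ℂ (Fin n))

theorem span_range_ee (n : ℕ) : Submodule.span ℂ (Set.range (ee n)) = ⊤ :=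
  coe_piBasisFun n ▸ (Pi.basisFun ℂ (Fin n)).span_eq

theorem ee_mem_Vhigh {n d : ℕ} {j : Fin n} (hj : d ≤ j) : ee n j ∈ Vhigh n d :=
  Submodule.subset_span ⟨j, hj, rfl⟩

theorem exists_linearMap_apply_ee_castLE_eq {n d : ℕ} (h : d ≤ n) (w : Fin d → Fin n → ℂ)
    (hw : ∀ k, w k ∈ Vhigh n d) :
    ∃ φ : (Fin n → ℂ) →ₗ[ℂ] (Fin n → ℂ), (∀ v, φ v ∈ Vhigh n d) ∧
      ∀ k, φ (ee n (Fin.castLE h k)) = w k := by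
  classical
  have hg : ∀ j, extend (Fin.castLE h) w 0 j ∈ Vhigh n d := fun j => by
    by_cases hj : ∃ k, Fin.castLE h k = j
    · obtain ⟨k, rfl⟩ := hj
      rw [(Fin.castLE_injective h).extend_apply]
      exact hw k
    · rw [extend_apply' _ _ _ hj]
      exact Submodule.zero_mem _
  refine ⟨(Pi.basisFun ℂ (Fin n)).constr ℂ (extend (Fin.castLE h) w 0), fun v => ?_,
    fun k => ?_⟩
  · exact (Module.Basis.constr_range _ ℂ).trans_le
      (Submodule.span_le.2 (Set.range_subset_iff.2 hg)) ⟨v, rfl⟩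
  · rw [← coe_piBasisFun, Module.Basis.constr_basis, (Fin.castLE_injective h).extend_apply]

theorem ιMulti_ee_comp_mem {n d : ℕ} (h : d ≤ n)
    {W : Submodule ℂ (ExteriorAlgebra ℂ (Fin n → ℂ))}
    (hW : ∀ w : Fin d → Fin n → ℂ, (∀ k, w k ∈ Vhigh n d) →
      ιMulti ℂ d ((fun k => ee n (Fin.castLE h k)) + w) ∈ W)
    (i : Fin d → Fin n) : ιMulti ℂ d (ee n ∘ i) ∈ W := by
  classical
  by_cases hi : Injective i
  swap
  · rw [AlternatingMap.map_eq_zero_of_not_injective _ _ fun h => hi h.of_comp]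
    exact W.zero_mem
  obtain ⟨σ, hσ⟩ := hi.exists_perm_apply_eq_of_mem_range (c := Fin.castLE h)
  have hmem : ιMulti ℂ d (ee n ∘ i ∘ σ.symm) ∈ W := by
    refine (ιMulti ℂ d).toMultilinearMap.apply_mem_of_forall_apply_add_mem
      (U := fun _ => Vhigh n d) _ hW _ fun t => ?_
    obtain ⟨k, rfl⟩ := σ.surjective t
    simp only [Function.comp_apply, σ.symm_apply_apply]
    by_cases hk : (i k : ℕ) < d
    · right
      rw [← hσ k ⟨⟨i k, hk⟩, rfl⟩, sub_self]
      exact Submodule.zero_mem _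
    · left
      exact ee_mem_Vhigh (not_lt.1 hk)
  rwa [← Function.comp_assoc, AlternatingMap.map_perm, Submodule.smul_mem_iff'] at hmem

theorem stmt3 (n d : ℕ) (hdn : d ≤ n - d) :
    Submodule.span ℂ {w : ExteriorAlgebra ℂ (Fin n → ℂ) |
        ∃ φ : (Fin n → ℂ) →ₗ[ℂ] (Fin n → ℂ), (∀ v ∈ Vlow n d, φ v ∈ Vhigh n d) ∧
          w = ExteriorAlgebra.ιMulti ℂ d fun k : Fin d =>
            ee n (Fin.castLE (by omega) k) + φ (ee n (Fin.castLE (by omega) k))} =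
      ⋀[ℂ]^d (Fin n → ℂ) := by
  have h : d ≤ n := by omega
  refine le_antisymm (Submodule.span_le.2 ?_) ?_
  · rintro _ ⟨φ, -, rfl⟩
    exact ιMulti_range ℂ d ⟨_, rfl⟩
  rw [← exteriorPower.ιMulti_span_fixedDegree_of_span_eq_top ℂ d _ (span_range_ee n),
    Submodule.span_le]
  rintro _ ⟨a, ha, rfl⟩
  obtain ⟨i, rfl⟩ := Set.range_subset_range_iff_exists_comp.1 ha
  refine ιMulti_ee_comp_mem h (fun w hw => Submodule.subset_span ?_) i
  obtain ⟨φ, hφ, hφw⟩ := exists_linearMap_apply_ee_castLE_eq h w hw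
  exact ⟨φ, fun v _ => hφ v, by simp only [hφw]; rfl⟩
end

section
/- For every linear map φ : p_J → C_J the following hold: (i) dim(U_φ ∩ V_{n−d}) ≥ 1 if and only if det(X_φ) = 0; (ii) dim(U_φ ∩ V_{n−d}) ≥ m if and only if X_φ = 0; (iii) if r > m, then dim(U_φ ∩ V_{n−d}) ≥ r holds for no φ. -/
/-- The columns of `X_φ`: the set `J_{>d}` (0-indexed: elements of `J` with value `≥ d`). -/
def colsF (n d : ℕ) (J : Finset (Fin n)) : Finset (Fin n) :=
  J.filter fun j : Fin n => d ≤ j.val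

/-- The rows of `X_φ`: the set `{1,…,d} ∖ J` (0-indexed: indices `< d` not in `J`). -/
def rowsF (n d : ℕ) (J : Finset (Fin n)) : Finset (Fin n) :=
  (Finset.univ.filter fun i : Fin n => i.val < d) \ J

/-- The subspace `U_φ = span{e_j + φ(e_j) : j ∈ J}`, where the linear map
`φ : p_J → C_J` is encoded by its matrix of coefficients `a`. -/
noncomputable def Uphi (n : ℕ) (J : Finset (Fin n))
    (a : {i : Fin n // i ∉ J} → {j : Fin n // j ∈ J} → ℂ) : Submodule ℂ (Fin n → ℂ) :=
  Submodule.span ℂ {v | ∃ j : {j : Fin n // j ∈ J},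
    v = ee n j.1 + ∑ i : {i : Fin n // i ∉ J}, a i j • ee n i.1}

/-- The `m × m` matrix `X_φ`, with rows indexed by `{1,…,d} ∖ J` and columns by
`J_{>d}`, both listed in increasing order. -/
noncomputable def Xphi (n d : ℕ) (J : Finset (Fin n)) (m : ℕ)
    (hrows : (rowsF n d J).card = m) (hcols : (colsF n d J).card = m)
    (a : {i : Fin n // i ∉ J} → {j : Fin n // j ∈ J} → ℂ) :
    Matrix (Fin m) (Fin m) ℂ :=
  Matrix.of fun p q =>
    a ⟨((rowsF n d J).orderIsoOfFin hrows p : Fin n), by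
        have h := ((rowsF n d J).orderIsoOfFin hrows p).2
        simp only [rowsF, Finset.mem_sdiff] at h
        exact h.2⟩
      ⟨((colsF n d J).orderIsoOfFin hcols q : Fin n), by
        have h := ((colsF n d J).orderIsoOfFin hcols q).2
        simp only [colsF, Finset.mem_filter] at h
        exact h.1⟩


/-!
A combination `∑ c_j (e_j + φ(e_j))` has coordinate `c_j` at each `j ∈ J`, so the spanning vectors
of `U_φ` are independent, and the combination lies in `V_{n-d}` iff `c` vanishes on
`J ∩ {1,…,d}` and the remaining coefficients, indexed by `J_{>d}`, satisfy `X_φ c = 0` (the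
coordinates in `{1,…,d} ∖ J`). Hence `U_φ ∩ V_{n-d} ≅ ker X_φ`, and all three claims are facts
about the nullity of an `m × m` matrix.
-/

namespace Matrix

variable {K ι κ : Type*} [Field K] [Fintype κ]

theorem one_le_finrank_ker_mulVecLin_iff [DecidableEq κ] (X : Matrix κ κ K) :
    1 ≤ Module.finrank K (LinearMap.ker X.mulVecLin) ↔ X.det = 0 := by
  rw [Submodule.one_le_finrank_iff, Submodule.ne_bot_iff, ← exists_mulVec_eq_zero_iff]
  simp only [LinearMap.mem_ker, mulVecLin_apply, and_comm]

theorem finrank_ker_mulVecLin_le (X : Matrix ι κ K) :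
    Module.finrank K (LinearMap.ker X.mulVecLin) ≤ Fintype.card κ := by
  simpa using (LinearMap.ker X.mulVecLin).finrank_le

theorem card_le_finrank_ker_mulVecLin_iff (X : Matrix ι κ K) :
    Fintype.card κ ≤ Module.finrank K (LinearMap.ker X.mulVecLin) ↔ X = 0 := by
  classical
  constructor
  · intro h
    have hker : LinearMap.ker X.mulVecLin = ⊤ :=
      Submodule.eq_top_of_finrank_eq (by simpa using (finrank_ker_mulVecLin_le X).antisymm h)
    rw [LinearMap.ker_eq_top, ← toLin'_apply'] at hker
    exact toLin'.map_eq_zero_iff.mp hker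
  · rintro rfl
    rw [mulVecLin_zero, LinearMap.ker_zero, finrank_top, Module.finrank_fintype_fun_eq_card]

end Matrix

section GraphBasis

variable {n d : ℕ} {J : Finset (Fin n)}

noncomputable def graphVec (a : {i : Fin n // i ∉ J} → {j : Fin n // j ∈ J} → ℂ)
    (j : {j : Fin n // j ∈ J}) : Fin n → ℂ :=
  ee n j.1 + ∑ i : {i : Fin n // i ∉ J}, a i j • ee n i.1

variable (a : {i : Fin n // i ∉ J} → {j : Fin n // j ∈ J} → ℂ)

theorem Uphi_eq_span_range_graphVec : Uphi n J a = Submodule.span ℂ (Set.range (graphVec a)) := by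
  simp only [Uphi, graphVec, Set.range, eq_comm]

theorem graphVec_apply_of_mem (j : {j : Fin n // j ∈ J}) {x : Fin n} (hx : x ∈ J) :
    graphVec a j x = if x = j.1 then 1 else 0 := by
  have hφ : ∀ i : {i : Fin n // i ∉ J}, (a i j • ee n i.1) x = 0 := fun i => by
    rw [Pi.smul_apply, ee, Pi.single_eq_of_ne (fun h : x = i.1 => i.2 (h ▸ hx)), smul_zero]
  rw [graphVec, Pi.add_apply, Finset.sum_apply, Finset.sum_eq_zero (fun i _ => hφ i), add_zero,
    ee, Pi.single_apply]

theorem graphVec_apply_of_notMem (j : {j : Fin n // j ∈ J}) {x : Fin n} (hx : x ∉ J) :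
    graphVec a j x = a ⟨x, hx⟩ j := by
  have hj : x ≠ j.1 := fun h => hx (h ▸ j.2)
  rw [graphVec, Pi.add_apply, ee, Pi.single_eq_of_ne hj, zero_add, Finset.sum_apply,
    Fintype.sum_eq_single ⟨x, hx⟩]
  · simp [ee]
  · intro i hi
    rw [Pi.smul_apply, ee, Pi.single_eq_of_ne (fun h => hi (Subtype.ext h.symm)), smul_zero]

theorem sum_smul_graphVec_apply_of_mem (c : {j : Fin n // j ∈ J} → ℂ) {x : Fin n} (hx : x ∈ J) :
    (∑ j, c j • graphVec a j) x = c ⟨x, hx⟩ := by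
  rw [Finset.sum_apply, Fintype.sum_eq_single ⟨x, hx⟩]
  · simp [graphVec_apply_of_mem a _ hx]
  · intro j hj
    rw [Pi.smul_apply, graphVec_apply_of_mem a _ hx, if_neg (fun h => hj (Subtype.ext h).symm),
      smul_zero]

theorem mem_Vhigh_iff {v : Fin n → ℂ} : v ∈ Vhigh n d ↔ ∀ i : Fin n, i.val < d → v i = 0 := by
  constructor
  · intro hv
    induction hv using Submodule.span_induction with
    | mem v hv =>
      obtain ⟨i, hi, rfl⟩ := hv
      intro x hx
      exact Pi.single_eq_of_ne (by rintro rfl; omega) _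
    | zero => simp
    | add v w _ _ hv hw => intro x hx; simp [hv x hx, hw x hx]
    | smul c v _ hv => intro x hx; simp [hv x hx]
  · intro hv
    rw [← Finset.univ_sum_single v]
    refine Submodule.sum_mem _ fun i _ => ?_
    by_cases hi : d ≤ i.val
    · have hsingle : Pi.single i (v i) = v i • ee n i := by
        rw [ee, ← Pi.single_smul', smul_eq_mul, mul_one]
      rw [hsingle]
      exact Submodule.smul_mem _ _ (Submodule.subset_span ⟨i, hi, rfl⟩)
    · rw [hv i (by omega), Pi.single_zero]
      exact zero_mem _

end GraphBasis

section Indexing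

variable {n d m : ℕ} {J : Finset (Fin n)}

noncomputable def colIdx (hcols : (colsF n d J).card = m) (q : Fin m) : {j : Fin n // j ∈ J} :=
  ⟨(colsF n d J).orderIsoOfFin hcols q,
    (Finset.mem_filter.mp ((colsF n d J).orderIsoOfFin hcols q).2).1⟩

noncomputable def rowIdx (hrows : (rowsF n d J).card = m) (p : Fin m) : {i : Fin n // i ∉ J} :=
  ⟨(rowsF n d J).orderIsoOfFin hrows p,
    (Finset.mem_sdiff.mp ((rowsF n d J).orderIsoOfFin hrows p).2).2⟩

theorem Xphi_apply (hrows : (rowsF n d J).card = m) (hcols : (colsF n d J).card = m)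
    (a : {i : Fin n // i ∉ J} → {j : Fin n // j ∈ J} → ℂ) (p q : Fin m) :
    Xphi n d J m hrows hcols a p q = a (rowIdx hrows p) (colIdx hcols q) :=
  rfl

theorem colIdx_injective (hcols : (colsF n d J).card = m) : Function.Injective (colIdx hcols) :=
  fun _ _ h => ((colsF n d J).orderIsoOfFin hcols).injective (Subtype.ext (Subtype.mk.inj h))

theorem le_colIdx (hcols : (colsF n d J).card = m) (q : Fin m) : d ≤ (colIdx hcols q).1.val :=
  (Finset.mem_filter.mp ((colsF n d J).orderIsoOfFin hcols q).2).2

theorem rowIdx_lt (hrows : (rowsF n d J).card = m) (p : Fin m) : (rowIdx hrows p).1.val < d :=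
  (Finset.mem_filter.mp (Finset.mem_sdiff.mp ((rowsF n d J).orderIsoOfFin hrows p).2).1).2

theorem exists_colIdx_eq (hcols : (colsF n d J).card = m) {j : {j : Fin n // j ∈ J}}
    (hj : d ≤ j.1.val) : ∃ q, colIdx hcols q = j :=
  ⟨((colsF n d J).orderIsoOfFin hcols).symm ⟨j.1, Finset.mem_filter.mpr ⟨j.2, hj⟩⟩,
    Subtype.ext (by simp [colIdx])⟩

theorem exists_rowIdx_eq (hrows : (rowsF n d J).card = m) {x : Fin n} (hxd : x.val < d)
    (hxJ : x ∉ J) : ∃ p, (rowIdx hrows p).1 = x :=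
  ⟨((rowsF n d J).orderIsoOfFin hrows).symm ⟨x, by simp [rowsF, hxd, hxJ]⟩, by simp [rowIdx]⟩

theorem sum_colIdx_eq_sum {M : Type*} [AddCommMonoid M] (hcols : (colsF n d J).card = m)
    (F : {j : Fin n // j ∈ J} → M) (hF : ∀ j : {j : Fin n // j ∈ J}, j.1.val < d → F j = 0) :
    ∑ q, F (colIdx hcols q) = ∑ j, F j :=
  Fintype.sum_of_injective _ (colIdx_injective hcols) _ _
    (fun j hj => hF j (by by_contra h; exact hj (exists_colIdx_eq hcols (by omega)))) fun _ => rfl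

end Indexing

section ColumnCombination

variable {n d m : ℕ} {J : Finset (Fin n)} (hrows : (rowsF n d J).card = m)
  (hcols : (colsF n d J).card = m) (a : {i : Fin n // i ∉ J} → {j : Fin n // j ∈ J} → ℂ)

noncomputable def colComb : (Fin m → ℂ) →ₗ[ℂ] (Fin n → ℂ) :=
  Fintype.linearCombination ℂ fun q => graphVec a (colIdx hcols q)

theorem colComb_apply (c : Fin m → ℂ) :
    colComb hcols a c = ∑ q, c q • graphVec a (colIdx hcols q) :=
  Fintype.linearCombination_apply _ _ _

theorem colComb_apply_colIdx (c : Fin m → ℂ) (q : Fin m) :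
    colComb hcols a c (colIdx hcols q).1 = c q := by
  rw [colComb_apply, Finset.sum_apply, Fintype.sum_eq_single q]
  · simp [graphVec_apply_of_mem a _ (colIdx hcols q).2]
  · intro q' hq'
    rw [Pi.smul_apply, graphVec_apply_of_mem a _ (colIdx hcols q).2,
      if_neg fun h => hq' (colIdx_injective hcols (Subtype.ext h)).symm, smul_zero]

theorem colComb_injective : Function.Injective (colComb hcols a) :=
  (injective_iff_map_eq_zero _).2 fun c hc => funext fun q => by
    simpa [hc] using (colComb_apply_colIdx hcols a c q).symm

theorem colComb_apply_of_mem_of_lt (c : Fin m → ℂ) {x : Fin n} (hxJ : x ∈ J) (hxd : x.val < d) :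
    colComb hcols a c x = 0 := by
  rw [colComb_apply, Finset.sum_apply]
  refine Finset.sum_eq_zero fun q _ => ?_
  have hx : x ≠ (colIdx hcols q).1 := fun h => by have := le_colIdx hcols q; omega
  rw [Pi.smul_apply, graphVec_apply_of_mem a _ hxJ, if_neg hx, smul_zero]

theorem colComb_apply_rowIdx (c : Fin m → ℂ) (p : Fin m) :
    colComb hcols a c (rowIdx hrows p).1 = (Xphi n d J m hrows hcols a).mulVec c p := by
  rw [colComb_apply, Finset.sum_apply, Matrix.mulVec, dotProduct]
  refine Finset.sum_congr rfl fun q _ => ?_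
  rw [Pi.smul_apply, graphVec_apply_of_notMem a _ (rowIdx hrows p).2, Xphi_apply, smul_eq_mul,
    mul_comm]

theorem colComb_mem_Uphi (c : Fin m → ℂ) : colComb hcols a c ∈ Uphi n J a := by
  rw [colComb_apply, Uphi_eq_span_range_graphVec]
  exact Submodule.sum_mem _ fun q _ =>
    Submodule.smul_mem _ _ (Submodule.subset_span ⟨colIdx hcols q, rfl⟩)

theorem map_colComb_ker_Xphi :
    (LinearMap.ker (Xphi n d J m hrows hcols a).mulVecLin).map (colComb hcols a) =
      Uphi n J a ⊓ Vhigh n d := by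
  ext v
  constructor
  · rintro ⟨c, hc, rfl⟩
    rw [SetLike.mem_coe, LinearMap.mem_ker, Matrix.mulVecLin_apply] at hc
    refine ⟨colComb_mem_Uphi hcols a c, mem_Vhigh_iff.2 fun x hxd => ?_⟩
    by_cases hxJ : x ∈ J
    · exact colComb_apply_of_mem_of_lt hcols a c hxJ hxd
    · obtain ⟨p, rfl⟩ := exists_rowIdx_eq hrows hxd hxJ
      rw [colComb_apply_rowIdx, hc, Pi.zero_apply]
  · rintro ⟨hvU, hvV⟩
    rw [SetLike.mem_coe, Uphi_eq_span_range_graphVec, Submodule.mem_span_range_iff_exists_fun]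
      at hvU
    obtain ⟨c, rfl⟩ := hvU
    rw [SetLike.mem_coe, mem_Vhigh_iff] at hvV
    have hc : ∀ j : {j : Fin n // j ∈ J}, j.1.val < d → c j = 0 := fun j hj => by
      rw [← sum_smul_graphVec_apply_of_mem a c j.2]
      exact hvV _ hj
    have hcomb : colComb hcols a (c ∘ colIdx hcols) = ∑ j, c j • graphVec a j := by
      rw [colComb_apply]
      exact sum_colIdx_eq_sum hcols (fun j => c j • graphVec a j)
        fun j hj => by rw [hc j hj, zero_smul]
    refine ⟨c ∘ colIdx hcols, ?_, hcomb⟩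
    rw [SetLike.mem_coe, LinearMap.mem_ker, Matrix.mulVecLin_apply]
    funext p
    rw [← colComb_apply_rowIdx, hcomb]
    exact hvV _ (rowIdx_lt hrows p)

theorem finrank_Uphi_inf_Vhigh :
    Module.finrank ℂ ↥(Uphi n J a ⊓ Vhigh n d) =
      Module.finrank ℂ (LinearMap.ker (Xphi n d J m hrows hcols a).mulVecLin) := by
  rw [← map_colComb_ker_Xphi hrows hcols a]
  exact (Submodule.equivMapOfInjective _ (colComb_injective hcols a) _).finrank_eq.symm

end ColumnCombination

theorem stmt10_general (n d : ℕ)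
    (J : Finset (Fin n)) (m : ℕ)
    (hcols : (colsF n d J).card = m) (hrows : (rowsF n d J).card = m)
    (a : {i : Fin n // i ∉ J} → {j : Fin n // j ∈ J} → ℂ) :
    (1 ≤ Module.finrank ℂ ↥(Uphi n J a ⊓ Vhigh n d) ↔
      (Xphi n d J m hrows hcols a).det = 0) ∧
    (m ≤ Module.finrank ℂ ↥(Uphi n J a ⊓ Vhigh n d) ↔
      Xphi n d J m hrows hcols a = 0) ∧
    (∀ r : ℕ, m < r → ¬ r ≤ Module.finrank ℂ ↥(Uphi n J a ⊓ Vhigh n d)) := by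
  rw [finrank_Uphi_inf_Vhigh hrows hcols a]
  have hle := (Xphi n d J m hrows hcols a).finrank_ker_mulVecLin_le
  rw [Fintype.card_fin] at hle
  refine ⟨Matrix.one_le_finrank_ker_mulVecLin_iff _, ?_, fun r hr hr' => by omega⟩
  simpa only [Fintype.card_fin] using (Xphi n d J m hrows hcols a).card_le_finrank_ker_mulVecLin_iff

theorem stmt10 (n d : ℕ) (hd1 : 1 ≤ d) (hdn : d ≤ n - d)
    (J : Finset (Fin n)) (hJ : J.card = d) (m : ℕ)
    (hcols : (colsF n d J).card = m) (hrows : (rowsF n d J).card = m)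
    (a : {i : Fin n // i ∉ J} → {j : Fin n // j ∈ J} → ℂ) :
    (1 ≤ Module.finrank ℂ ↥(Uphi n J a ⊓ Vhigh n d) ↔
      (Xphi n d J m hrows hcols a).det = 0) ∧
    (m ≤ Module.finrank ℂ ↥(Uphi n J a ⊓ Vhigh n d) ↔
      Xphi n d J m hrows hcols a = 0) ∧
    (∀ r : ℕ, m < r → ¬ r ≤ Module.finrank ℂ ↥(Uphi n J a ⊓ Vhigh n d)) :=
  stmt10_general n d J m hcols hrows a
end
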